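/- arXiv:2602.09788 — 4 statements merged into one kernel-verified Lean document; each statement's English description precedes it below -/
import Mathlib

section
/- Let m be a natural number and let A, B ⊆ Fin m be finite sets. Then v_A · v_B = 1 in ZMod 2 if and only if A ∪ B = Fin m (the full index set, i.e., A ∪ B = Finset.univ). -/
/-- The vector `v_A` : its value at a label `x : Fin m → ZMod 2` is `∏_{a ∈ A} x a`. -/
def vA (m : ℕ) (A : Finset (Fin m)) : (Fin m → ZMod 2) → ZMod 2 :=
  fun x => ∏ a ∈ A, x a

/-- Dot product of two vectors, computed in `ZMod 2`. -/
def dotp (m : ℕ) (w z : (Fin m → ZMod 2) → ZMod 2) : ZMod 2 :=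
  ∑ x, w x * z x

lemma prod_mul_prod_eq_union (m : ℕ) (A B : Finset (Fin m)) (x : Fin m → ZMod 2) :
    (∏ a ∈ A, x a) * (∏ b ∈ B, x b) = ∏ i ∈ A ∪ B, x i := by
  rw [← Finset.prod_union_inter, ← Finset.prod_sdiff (Finset.inter_subset_union (s := A) (t := B)),
    mul_assoc, ← Finset.prod_mul_distrib]
  congr 1
  refine Finset.prod_congr rfl fun i _ => ?_
  have : ∀ a : ZMod 2, a * a = a := by decide
  exact this _

/-- `v_A · v_B = 1` if and only if `A ∪ B` is the full index set. -/
theorem stmt2 (m : ℕ) (A B : Finset (Fin m)) :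
    dotp m (vA m A) (vA m B) = 1 ↔ A ∪ B = Finset.univ := by
  classical
  have key : dotp m (vA m A) (vA m B)
      = ∏ i : Fin m, (if i ∈ A ∪ B then (1 : ZMod 2) else 0) := by
    unfold dotp vA
    have h1 : ∀ x : Fin m → ZMod 2,
        (∏ a ∈ A, x a) * (∏ b ∈ B, x b)
          = ∏ i : Fin m, (if i ∈ A ∪ B then x i else 1) := by
      intro x
      rw [prod_mul_prod_eq_union]
      rw [← Finset.prod_filter]
      congr 1
      ext i
      simp
    calc (∑ x : Fin m → ZMod 2, (∏ a ∈ A, x a) * ∏ b ∈ B, x b)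
        = ∑ x : Fin m → ZMod 2, ∏ i : Fin m,
            (fun (i : Fin m) (v : ZMod 2) => if i ∈ A ∪ B then v else 1) i (x i) := by
          exact Finset.sum_congr rfl fun x _ => h1 x
      _ = ∏ i : Fin m, ∑ v : ZMod 2, (if i ∈ A ∪ B then v else 1) :=
          (Fintype.prod_sum (ι := Fin m) (κ := fun _ => ZMod 2)
            (fun (i : Fin m) (v : ZMod 2) => if i ∈ A ∪ B then v else 1)).symm
      _ = ∏ i : Fin m, (if i ∈ A ∪ B then (1 : ZMod 2) else 0) := by
          refine Finset.prod_congr rfl fun i _ => ?_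
          by_cases h : i ∈ A ∪ B <;> simp [h] <;> decide
  rw [key]
  constructor
  · intro h
    by_contra hne
    obtain ⟨i, hi⟩ : ∃ i, i ∉ A ∪ B := by
      by_contra h'
      push_neg at h'
      exact hne (Finset.eq_univ_iff_forall.mpr h')
    rw [Finset.prod_eq_zero (Finset.mem_univ i) (by simp [hi])] at h
    exact absurd h (by decide)
  · intro h
    simp [h]
end

section
/- Let ι be a finite type and let π be a permutation of ι satisfying π ∘ π = id. Then for every binary vector w : ι → ZMod 2, the phase-type fold-transversal gate satisfies U_P(π) * Z(w) * U_P(π)⁻¹ = Z(w), and U_P(π) * X(w) * U_P(π)⁻¹ = i^c • (X(w) * Z(w ∘ π)), where i = √−1 and c is the natural number equal to the Hamming weight of the pointwise product w ∧ (w ∘ π), i.e., c = #{q ∈ ι : w(q) = 1 and w(π(q)) = 1}. -/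
variable {ι : Type*} [Fintype ι] [DecidableEq ι]

/-- The Pauli-X type operator `X(w)`: the matrix with `(y, x)` entry `1` if
`y = x + w` and `0` otherwise. -/
noncomputable def Xg (w : ι → ZMod 2) : Matrix (ι → ZMod 2) (ι → ZMod 2) ℂ :=
  Matrix.of fun y x => if y = x + w then 1 else 0

/-- `N(w, x)`: the number of qubits `q` with `w q = 1` and `x q = 1`. -/
def Ng (w x : ι → ZMod 2) : ℕ :=
  (Finset.univ.filter (fun q => w q = 1 ∧ x q = 1)).card

/-- The Pauli-Z type operator `Z(w)`: the diagonal matrix with `(x, x)` entry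
`(-1) ^ N(w, x)`. -/
noncomputable def Zg (w : ι → ZMod 2) : Matrix (ι → ZMod 2) (ι → ZMod 2) ℂ :=
  Matrix.diagonal fun x => (-1) ^ Ng w x

/-- The phase-type fold-transversal gate `U_P(π)` of an involutive permutation
`π` of the qubits: the diagonal matrix with `(x, x)` entry `i ^ c(x)`, where
`c(x) = ∑_q x(q)·x(π(q))` computed in `ℕ`. -/
noncomputable def UPg (f : ι → ι) : Matrix (ι → ZMod 2) (ι → ZMod 2) ℂ :=
  Matrix.diagonal fun x => Complex.I ^ (∑ q, (x q).val * (x (f q)).val)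

lemma zmod2_val_add : ∀ u v : ZMod 2,
    (((u + v).val : ℤ)) = u.val + v.val - 2 * (u.val * v.val) := by decide

lemma card_eq_sum_val (w v : ι → ZMod 2) :
    (((Finset.univ.filter (fun q => w q = 1 ∧ v q = 1)).card : ℤ))
      = ∑ q, ((w q).val : ℤ) * (v q).val := by
  rw [Finset.card_filter]
  push_cast
  refine Finset.sum_congr rfl fun q _ => ?_
  have h : ∀ u t : ZMod 2, ((if u = 1 ∧ t = 1 then (1:ℤ) else 0)) = u.val * t.val := by decide
  exact h _ _

lemma key (π : Equiv.Perm ι) (hπ : ∀ q, π (π q) = q) (w x : ι → ZMod 2) :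
    ∃ m : ℤ,
      (∑ q, ((x q + w q).val : ℤ) * ((x (π q) + w (π q)).val))
        = (∑ q, ((x q).val : ℤ) * (x (π q)).val)
          + (∑ q, ((w q).val : ℤ) * (w (π q)).val)
          + 2 * (∑ q, ((x q).val : ℤ) * (w (π q)).val) + 4 * m := by
  set a : ι → ℤ := fun q => (x q).val with ha
  set b : ι → ℤ := fun q => (w q).val with hb
  set G : ι → ℤ := fun q =>
    2 * (a q * b q * a (π q) * b (π q)) - a q * b q * a (π q) - a q * b q * b (π q)
      - a q * a (π q) * b (π q) - a (π q) * b (π q) * b q with hG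
  have h2 : ((2 : ℤ) : ZMod 2) = 0 := by decide
  have hGsym : ∀ q, G (π q) = G q := by
    intro q
    simp only [hG, hπ q]
    ring
  have hGfix : ∀ q, π q = q → ((G q : ℤ) : ZMod 2) = 0 := by
    intro q h
    have he : G q = 2 * (a q * b q * a q * b q - a q * b q * a q - a q * b q * b q) := by
      simp only [hG, h]; ring
    rw [he, Int.cast_mul, h2, zero_mul]
  have hsum0 : ((∑ q, G q : ℤ) : ZMod 2) = 0 := by
    rw [Int.cast_sum]
    refine Finset.sum_involution (fun q _ => π q) ?_ ?_ (fun q _ => Finset.mem_univ _) ?_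
    · intro q _
      rw [hGsym q, ← Int.cast_add, show G q + G q = 2 * G q from by ring, Int.cast_mul, h2,
        zero_mul]
    · intro q _ hne h
      exact hne (hGfix q h)
    · intro q _
      exact hπ q
  have hdvd : (2 : ℤ) ∣ ∑ q, G q := by
    exact_mod_cast (ZMod.intCast_zmod_eq_zero_iff_dvd (∑ q, G q) 2).mp hsum0
  obtain ⟨m, hm⟩ := hdvd
  refine ⟨m, ?_⟩
  have expand : ∀ q, ((x q + w q).val : ℤ) * ((x (π q) + w (π q)).val)
      = a q * a (π q) + b q * b (π q) + a q * b (π q) + a (π q) * b q + 2 * G q := by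
    intro q
    rw [zmod2_val_add, zmod2_val_add]
    simp only [hG, ha, hb]
    ring
  have hswap : (∑ q, a (π q) * b q) = ∑ q, a q * b (π q) := by
    have h' := Equiv.sum_comp π (fun q => a q * b (π q))
    simp only [hπ] at h'
    exact h'
  calc (∑ q, ((x q + w q).val : ℤ) * ((x (π q) + w (π q)).val))
      = ∑ q, (a q * a (π q) + b q * b (π q) + a q * b (π q) + a (π q) * b q + 2 * G q) :=
        Finset.sum_congr rfl fun q _ => expand q
    _ = (∑ q, a q * a (π q)) + (∑ q, b q * b (π q)) + (∑ q, a q * b (π q))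
          + (∑ q, a (π q) * b q) + 2 * ∑ q, G q := by
        simp [Finset.sum_add_distrib, Finset.mul_sum]
    _ = _ := by rw [hswap, hm]; ring

lemma Ipow_eq (ny nx nc nN : ℕ) (m : ℤ) (h : (ny : ℤ) = nx + nc + 2 * nN + 4 * m) :
    Complex.I ^ ny * (Complex.I ^ nx)⁻¹ = Complex.I ^ nc * (-1) ^ nN := by
  have hI : Complex.I ≠ 0 := Complex.I_ne_zero
  have hzy : Complex.I ^ ny = Complex.I ^ ((ny : ℤ)) := (zpow_natCast _ _).symm
  rw [hzy, h, zpow_add₀ hI, zpow_add₀ hI, zpow_add₀ hI]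
  have hI2 : Complex.I ^ (2:ℤ) = -1 := by
    rw [show (2:ℤ) = ((2:ℕ):ℤ) by norm_num, zpow_natCast, Complex.I_sq]
  have hI4 : Complex.I ^ (4:ℤ) = 1 := by
    rw [show (4:ℤ) = ((4:ℕ):ℤ) by norm_num, zpow_natCast, Complex.I_pow_four]
  have h2 : Complex.I ^ ((2 * (nN : ℤ))) = (-1 : ℂ) ^ nN := by
    rw [zpow_mul, hI2, zpow_natCast]
  have h4 : Complex.I ^ ((4 * m : ℤ)) = 1 := by
    rw [zpow_mul, hI4, one_zpow]
  rw [h2, h4, zpow_natCast, zpow_natCast]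
  have hx : Complex.I ^ nx ≠ 0 := pow_ne_zero _ hI
  field_simp

/-- Conjugation by `U_P(π)` fixes `Z(w)` and maps `X(w)` to
`i^c • (X(w) * Z(w ∘ π))`, where `c = #{q : w q = 1 ∧ w (π q) = 1}`. -/
theorem stmt8 (π : Equiv.Perm ι) (hπ : ⇑π ∘ ⇑π = id) (w : ι → ZMod 2) :
    UPg ⇑π * Zg w * (UPg ⇑π)⁻¹ = Zg w ∧
    UPg ⇑π * Xg w * (UPg ⇑π)⁻¹ =
      (Complex.I ^ (Finset.univ.filter (fun q => w q = 1 ∧ w (π q) = 1)).card) •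
        (Xg w * Zg (w ∘ ⇑π)) := by
  have hπ' : ∀ q, π (π q) = q := fun q => congrFun hπ q
  set d : (ι → ZMod 2) → ℂ := fun x => Complex.I ^ (∑ q, (x q).val * (x (π q)).val) with hd
  have hd0 : ∀ x, d x ≠ 0 := fun x => pow_ne_zero _ Complex.I_ne_zero
  have hUP : UPg ⇑π = Matrix.diagonal d := rfl
  have hinv : (UPg ⇑π)⁻¹ = Matrix.diagonal fun x => (d x)⁻¹ := by
    apply Matrix.inv_eq_right_inv
    rw [hUP, Matrix.diagonal_mul_diagonal]
    convert Matrix.diagonal_one using 2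
    exact funext fun x => mul_inv_cancel₀ (hd0 x)
  constructor
  · rw [hinv, hUP]
    show Matrix.diagonal d * Matrix.diagonal (fun x => (-1) ^ Ng w x) * _ = _
    rw [Matrix.diagonal_mul_diagonal, Matrix.diagonal_mul_diagonal]
    show _ = Matrix.diagonal fun x => (-1) ^ Ng w x
    refine congrArg Matrix.diagonal (funext fun i => ?_)
    rw [mul_assoc, mul_comm ((-1 : ℂ) ^ Ng w i), ← mul_assoc,
      mul_inv_cancel₀ (hd0 i), one_mul]
  · rw [hinv, hUP]
    ext y x
    rw [Matrix.mul_assoc, Matrix.diagonal_mul, Matrix.mul_diagonal, Matrix.smul_apply]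
    show d y * (Xg w y x * (d x)⁻¹)
      = _ • ((Xg w * Matrix.diagonal fun z => (-1 : ℂ) ^ Ng (w ∘ ⇑π) z) y x)
    rw [Matrix.mul_diagonal]
    rcases eq_or_ne y (x + w) with h | h
    · subst h
      simp only [Xg, Matrix.of_apply, eq_self_iff_true, if_true]
      rw [one_mul, one_mul, smul_eq_mul]
      obtain ⟨m, hm⟩ := key π hπ' w x
      have hcast : ((∑ q, ((x + w) q).val * ((x + w) (π q)).val : ℕ) : ℤ)
          = ((∑ q, (x q).val * (x (π q)).val : ℕ) : ℤ)
            + ((Finset.univ.filter (fun q => w q = 1 ∧ w (π q) = 1)).card : ℤ)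
            + 2 * ((Ng (w ∘ ⇑π) x : ℕ) : ℤ) + 4 * m := by
        rw [card_eq_sum_val]
        rw [show ((Ng (w ∘ ⇑π) x : ℕ) : ℤ) = ∑ q, ((w (π q)).val : ℤ) * (x q).val from
          card_eq_sum_val (w ∘ ⇑π) x]
        push_cast
        simp only [Pi.add_apply]
        rw [hm]
        have hc : (∑ q, ((w (π q)).val : ℤ) * (x q).val)
            = ∑ q, ((x q).val : ℤ) * (w (π q)).val :=
          Finset.sum_congr rfl fun q _ => mul_comm _ _
        rw [hc]
      exact Ipow_eq _ _ _ _ m hcast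
    · simp only [Xg, Matrix.of_apply, if_neg h]
      simp
end

section
/- Let m be a natural number. (i) For distinct i, j ∈ Fin m and any finite set A ⊆ Fin m: if i ∈ A then R({(i,j)}) v_A = v_{(A∪{j})∖{i}}, and if i ∉ A then R({(i,j)}) v_A = 0. (ii) For any nonempty finite set K of ordered pairs of elements of Fin m with pairwise distinct components, and any finite set A ⊆ Fin m: if F₁(K) ⊆ A then R(K) v_A = v_{(A∪F₂(K))∖F₁(K)}, and if F₁(K) ⊄ A then R(K) v_A = 0. -/
/-- The space of vectors: functions from labels to `ZMod 2`. -/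
abbrev Vec (m : ℕ) := (Fin m → ZMod 2) → ZMod 2

/-- The `ZMod 2`-linear action of an involutive map `f` on the label set:
`w ↦ w ∘ f` (for an involutive permutation `π` this is `M_π w = w ∘ π⁻¹`). -/
def Mlin (m : ℕ) (f : (Fin m → ZMod 2) → (Fin m → ZMod 2)) :
    Module.End (ZMod 2) (Vec m) where
  toFun w := w ∘ f
  map_add' _ _ := rfl
  map_smul' _ _ := rfl

/-- `Q(i,j)`: the involutive permutation of labels replacing `x i` by
`x i + x j` and fixing all other coordinates. -/
def Qmap (m : ℕ) (i j : Fin m) : (Fin m → ZMod 2) → (Fin m → ZMod 2) :=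
  fun x => Function.update x i (x i + x j)

/-- All first and second components of the pairs in `K` are pairwise
distinct. -/
def distinctPairs (m : ℕ) (K : Finset (Fin m × Fin m)) : Prop :=
  (∀ p ∈ K, p.1 ≠ p.2) ∧
  (∀ p ∈ K, ∀ q ∈ K, p ≠ q →
    p.1 ≠ q.1 ∧ p.1 ≠ q.2 ∧ p.2 ≠ q.1 ∧ p.2 ≠ q.2)

/-- The permutation `Q(K)` of the labels: it sends `x` to the label `y` with
`y i = x i + x j` for each `(i,j) ∈ K` and `y l = x l` for all other `l`. -/
def QKmap (m : ℕ) (K : Finset (Fin m × Fin m)) :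
    (Fin m → ZMod 2) → (Fin m → ZMod 2) :=
  fun x l => x l + ∑ p ∈ K.filter (fun p => p.1 = l), x p.2

/-- The set of first components of the pairs of `K`. -/
def F1 (m : ℕ) (K : Finset (Fin m × Fin m)) : Finset (Fin m) := K.image Prod.fst

/-- The set of second components of the pairs of `K`. -/
def F2 (m : ℕ) (K : Finset (Fin m × Fin m)) : Finset (Fin m) := K.image Prod.snd

/-- The replacement operator `R(K)`: the (commuting) composition over
`(i,j) ∈ K` of the operators `R(i,j) = M_{Q(i,j)} + id`; `R(∅) = id`. -/
noncomputable def RK (m : ℕ) (K : Finset (Fin m × Fin m)) :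
    Module.End (ZMod 2) (Vec m) :=
  (K.toList.map fun p => Mlin m (Qmap m p.1 p.2) + 1).prod

lemma Finset.mul_prod_eq_prod_insert_of_isIdempotentElem {ι M : Type*} [DecidableEq ι]
    [CommMonoid M] (s : Finset ι) (f : ι → M) {j : ι} (hj : IsIdempotentElem (f j)) :
    f j * ∏ a ∈ s, f a = ∏ a ∈ insert j s, f a := by
  by_cases hjs : j ∈ s
  · rw [Finset.insert_eq_of_mem hjs, ← Finset.mul_prod_erase s f hjs, ← mul_assoc, hj.eq]
  · rw [Finset.prod_insert hjs]

lemma ZMod.isIdempotentElem_two (z : ZMod 2) : IsIdempotentElem z := by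
  fin_cases z <;> rfl

section Replacement

variable {m : ℕ}

lemma vA_Qmap_of_notMem {i : Fin m} (j : Fin m) {A : Finset (Fin m)} (hi : i ∉ A)
    (x : Fin m → ZMod 2) : vA m A (Qmap m i j x) = vA m A x :=
  Finset.prod_congr rfl fun a ha =>
    Function.update_of_ne (by rintro rfl; exact hi ha) _ x

lemma vA_Qmap_of_mem {i j : Fin m} {A : Finset (Fin m)} (hi : i ∈ A) (x : Fin m → ZMod 2) :
    vA m A (Qmap m i j x) = vA m A x + vA m (insert j (A.erase i)) x := by
  have hrest : ∏ a ∈ A.erase i, Qmap m i j x a = ∏ a ∈ A.erase i, x a :=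
    Finset.prod_congr rfl fun a ha =>
      Function.update_of_ne (Finset.ne_of_mem_erase ha) _ x
  simp only [vA, ← Finset.mul_prod_erase A _ hi, hrest,
    ← Finset.mul_prod_eq_prod_insert_of_isIdempotentElem _ _ (ZMod.isIdempotentElem_two (x j))]
  simp only [Qmap, Function.update_self]
  ring

lemma replaceStep_vA {i j : Fin m} (A : Finset (Fin m)) :
    (Mlin m (Qmap m i j) + 1) (vA m A) =
      if i ∈ A then vA m (insert j (A.erase i)) else 0 := by
  funext x
  change vA m A (Qmap m i j x) + vA m A x = _
  split_ifs with hi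
  · rw [vA_Qmap_of_mem hi, add_right_comm, CharTwo.add_self_eq_zero, zero_add]
  · rw [vA_Qmap_of_notMem j hi, CharTwo.add_self_eq_zero]
    rfl

lemma F1_insert (p : Fin m × Fin m) (K : Finset (Fin m × Fin m)) :
    F1 m (insert p K) = insert p.1 (F1 m K) :=
  Finset.image_insert _ _ _

lemma F2_insert (p : Fin m × Fin m) (K : Finset (Fin m × Fin m)) :
    F2 m (insert p K) = insert p.2 (F2 m K) :=
  Finset.image_insert _ _ _

lemma list_prod_replaceStep_vA (L : List (Fin m × Fin m)) (hne : ∀ p ∈ L, p.1 ≠ p.2)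
    (hL : L.Pairwise fun p q => p.1 ≠ q.1 ∧ p.1 ≠ q.2 ∧ p.2 ≠ q.1) (A : Finset (Fin m)) :
    (L.map fun p => Mlin m (Qmap m p.1 p.2) + 1).prod (vA m A) =
      if F1 m L.toFinset ⊆ A then vA m ((A ∪ F2 m L.toFinset) \ F1 m L.toFinset) else 0 := by
  induction L with
  | nil => simp [F1, F2]
  | cons p L ih =>
    obtain ⟨hp, hL⟩ := List.pairwise_cons.1 hL
    have hnotMem {f : Fin m × Fin m → Fin m} {a : Fin m} (h : ∀ q ∈ L, a ≠ f q) :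
        a ∉ L.toFinset.image f := by
      simpa [eq_comm] using h
    have hp₁F₁ : p.1 ∉ F1 m L.toFinset := hnotMem fun q hq => (hp q hq).1
    have hp₁F₂ : p.1 ∉ F2 m L.toFinset := hnotMem fun q hq => (hp q hq).2.1
    have hp₂F₁ : p.2 ∉ F1 m L.toFinset := hnotMem fun q hq => (hp q hq).2.2
    have hp₁₂ : p.1 ≠ p.2 := hne p List.mem_cons_self
    rw [List.map_cons, List.prod_cons, Module.End.mul_apply,
      ih (fun q hq => hne q (List.mem_cons_of_mem p hq)) hL, List.toFinset_cons, F1_insert,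
      F2_insert]
    by_cases hF : F1 m L.toFinset ⊆ A
    · have hmem : p.1 ∈ (A ∪ F2 m L.toFinset) \ F1 m L.toFinset ↔ p.1 ∈ A := by
        simp [hp₁F₁, hp₁F₂]
      rw [if_pos hF, replaceStep_vA]
      by_cases hpA : p.1 ∈ A
      · rw [if_pos (hmem.2 hpA), if_pos (Finset.insert_subset_iff.2 ⟨hpA, hF⟩)]
        congr 1
        ext a
        simp only [Finset.mem_insert, Finset.mem_erase, Finset.mem_sdiff, Finset.mem_union]
        grind
      · rw [if_neg (mt hmem.1 hpA), if_neg fun h => hpA (Finset.insert_subset_iff.1 h).1]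
    · simp [hF, Finset.insert_subset_iff]

lemma RK_vA {K : Finset (Fin m × Fin m)} (hK : distinctPairs m K) (A : Finset (Fin m)) :
    RK m K (vA m A) = if F1 m K ⊆ A then vA m ((A ∪ F2 m K) \ F1 m K) else 0 := by
  have hL := K.nodup_toList.pairwise_of_forall_ne fun p hp q hq hpq =>
    have h := hK.2 p (Finset.mem_toList.1 hp) q (Finset.mem_toList.1 hq) hpq
    (⟨h.1, h.2.1, h.2.2.1⟩ : p.1 ≠ q.1 ∧ p.1 ≠ q.2 ∧ p.2 ≠ q.1)
  have h := list_prod_replaceStep_vA K.toList (fun p hp => hK.1 p (Finset.mem_toList.1 hp)) hL A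
  rwa [Finset.toList_toFinset] at h

lemma distinctPairs_singleton {i j : Fin m} (hij : i ≠ j) : distinctPairs m {(i, j)} :=
  ⟨by simpa using hij, by simp⟩

end Replacement

/-- (i) `R({(i,j)}) v_A = v_{(A∪{j})∖{i}}` if `i ∈ A`, and `= 0` if `i ∉ A`.
(ii) For nonempty `K` with pairwise distinct components,
`R(K) v_A = v_{(A∪F₂(K))∖F₁(K)}` if `F₁(K) ⊆ A`, and `= 0` otherwise. -/
theorem stmt11 (m : ℕ) :
    (∀ i j : Fin m, i ≠ j → ∀ A : Finset (Fin m),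
      (i ∈ A → RK m {(i, j)} (vA m A) = vA m ((A ∪ {j}) \ {i})) ∧
      (i ∉ A → RK m {(i, j)} (vA m A) = 0)) ∧
    (∀ K : Finset (Fin m × Fin m), K.Nonempty → distinctPairs m K →
      ∀ A : Finset (Fin m),
      (F1 m K ⊆ A → RK m K (vA m A) = vA m ((A ∪ F2 m K) \ F1 m K)) ∧
      (¬ F1 m K ⊆ A → RK m K (vA m A) = 0)) := by
  refine ⟨fun i j hij A => ?_, fun K _ hK A => ?_⟩
  · have h := RK_vA (distinctPairs_singleton hij) A
    simp only [F1, F2, Finset.image_singleton, Finset.singleton_subset_iff] at h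
    exact ⟨fun hi => by rw [h, if_pos hi], fun hi => by rw [h, if_neg hi]⟩
  · rw [RK_vA hK]
    exact ⟨fun hF => if_pos hF, fun hF => if_neg hF⟩
end

section
/- Let m be a natural number and let K be a finite set of ordered pairs of elements of Fin m whose components are all pairwise distinct. Then, as ZMod 2-linear endomorphisms of the vector space (Fin m → ZMod 2) → ZMod 2: R(K) = ∑_{L ⊆ K} M_{Q(L)} and M_{Q(K)} = ∑_{L ⊆ K} R(L), where both sums range over all subsets L of K (including L = ∅ and L = K). -/
-- auxiliary lemmas

lemma Mlin_mul (m : ℕ) (f g : (Fin m → ZMod 2) → (Fin m → ZMod 2)) :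
    Mlin m f * Mlin m g = Mlin m (g ∘ f) := rfl

lemma Qmap_comm (m : ℕ) {i j k l : Fin m} (h1 : i ≠ k) (h2 : j ≠ k) (h3 : l ≠ i) :
    Qmap m i j ∘ Qmap m k l = Qmap m k l ∘ Qmap m i j := by
  funext x c
  simp only [Function.comp, Qmap, Function.update_apply]
  split_ifs <;> simp_all

lemma distinctPairs_subset {m : ℕ} {K K' : Finset (Fin m × Fin m)}
    (h : K' ⊆ K) (hK : distinctPairs m K) : distinctPairs m K' :=
  ⟨fun p hp => hK.1 p (h hp), fun p hp q hq hpq => hK.2 p (h hp) q (h hq) hpq⟩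

lemma commute_factors {m : ℕ} {K : Finset (Fin m × Fin m)} (hK : distinctPairs m K)
    {p q : Fin m × Fin m} (hp : p ∈ K) (hq : q ∈ K) :
    Commute (Mlin m (Qmap m p.1 p.2) + 1) (Mlin m (Qmap m q.1 q.2) + 1) := by
  rcases eq_or_ne p q with rfl | hne
  · exact Commute.refl _
  · have h := hK.2 p hp q hq hne
    have hc : Commute (Mlin m (Qmap m p.1 p.2)) (Mlin m (Qmap m q.1 q.2)) := by
      show _ * _ = _ * _
      rw [Mlin_mul, Mlin_mul, Qmap_comm m (Ne.symm h.1) (Ne.symm h.2.1) h.2.2.1]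
    exact (hc.add_right (Commute.one_right _)).add_left
      ((Commute.one_left _).add_right (Commute.one_left _))

lemma RK_insert {m : ℕ} {p : Fin m × Fin m} {K : Finset (Fin m × Fin m)}
    (hp : p ∉ K) (hK : distinctPairs m (insert p K)) :
    RK m (insert p K) = (Mlin m (Qmap m p.1 p.2) + 1) * RK m K := by
  unfold RK
  have hperm := (Finset.toList_insert hp).map (fun q => Mlin m (Qmap m q.1 q.2) + 1)
  rw [hperm.prod_eq' ?_]
  · simp
  · refine List.pairwise_of_forall_mem_list ?_
    intro a ha b hb
    simp only [List.mem_map, Finset.mem_toList] at ha hb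
    obtain ⟨a', ha', rfl⟩ := ha
    obtain ⟨b', hb', rfl⟩ := hb
    exact commute_factors hK ha' hb'

lemma QKmap_empty (m : ℕ) : QKmap m ∅ = id := by
  funext x l; simp [QKmap]

lemma QKmap_insert {m : ℕ} {p : Fin m × Fin m} {L : Finset (Fin m × Fin m)}
    (h1 : p.1 ∉ F1 m L) (h2 : p.1 ∉ F2 m L) :
    QKmap m (insert p L) = QKmap m L ∘ Qmap m p.1 p.2 := by
  have hpL : p ∉ L := fun h => h1 (Finset.mem_image_of_mem Prod.fst h)
  funext x l
  have hupd : ∀ q ∈ L.filter (fun q => q.1 = l), (Qmap m p.1 p.2 x) q.2 = x q.2 := by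
    intro q hq
    have : q.2 ≠ p.1 := fun h => h2 (by
      rw [← h]; exact Finset.mem_image_of_mem Prod.snd (Finset.mem_filter.1 hq).1)
    simp [Qmap, Function.update_apply, this]
  rcases eq_or_ne l p.1 with rfl | hl
  · have hfilt : L.filter (fun q => q.1 = p.1) = ∅ := by
      rw [Finset.filter_eq_empty_iff]
      intro q hq h
      exact h1 (by rw [← h]; exact Finset.mem_image_of_mem Prod.fst hq)
    simp only [QKmap, Function.comp_apply, Finset.filter_insert, if_pos rfl, hfilt]
    simp [Qmap, Function.update_apply]
  · simp only [QKmap, Function.comp_apply, Finset.filter_insert, if_neg (Ne.symm hl)]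
    rw [Finset.sum_congr rfl hupd]
    congr 1
    simp [Qmap, Function.update_apply, hl]

lemma fresh_of_insert {m : ℕ} {p : Fin m × Fin m} {K L : Finset (Fin m × Fin m)}
    (hp : p ∉ K) (hK : distinctPairs m (insert p K)) (hL : L ⊆ K) :
    p.1 ∉ F1 m L ∧ p.1 ∉ F2 m L := by
  constructor <;> · 
    intro h
    simp only [F1, F2, Finset.mem_image] at h
    obtain ⟨q, hq, hq1⟩ := h
    have hpq : p ≠ q := fun h => hp (h ▸ hL hq)
    have := hK.2 p (Finset.mem_insert_self _ _) q
      (Finset.mem_insert_of_mem (hL hq)) hpq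
    first
      | exact this.1 hq1.symm
      | exact this.2.1 hq1.symm

lemma part1 {m : ℕ} {K : Finset (Fin m × Fin m)} (hK : distinctPairs m K) :
    RK m K = ∑ L ∈ K.powerset, Mlin m (QKmap m L) := by
  induction K using Finset.induction_on with
  | empty => simp [RK, QKmap_empty]; rfl
  | @insert p K hp ih =>
    rw [RK_insert hp hK, ih (distinctPairs_subset (Finset.subset_insert _ _) hK),
      Finset.sum_powerset_insert hp]
    rw [add_mul, one_mul, Finset.mul_sum, add_comm]
    congr 1
    refine Finset.sum_congr rfl fun L hL => ?_
    rw [Finset.mem_powerset] at hL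
    obtain ⟨h1, h2⟩ := fresh_of_insert hp hK hL
    rw [Mlin_mul, QKmap_insert h1 h2]

lemma part2 {m : ℕ} {K : Finset (Fin m × Fin m)} (hK : distinctPairs m K) :
    Mlin m (QKmap m K) = ∑ L ∈ K.powerset, RK m L := by
  induction K using Finset.induction_on with
  | empty => simp [RK, QKmap_empty]; rfl
  | @insert p K hp ih =>
    have hK' := distinctPairs_subset (Finset.subset_insert _ _) hK
    have hQ : QKmap m (insert p K) = QKmap m K ∘ Qmap m p.1 p.2 := by
      obtain ⟨h1, h2⟩ := fresh_of_insert hp hK (Finset.Subset.refl K)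
      exact QKmap_insert h1 h2
    rw [hQ, ← Mlin_mul, ih hK', Finset.sum_powerset_insert hp]
    have key : ∀ L ∈ K.powerset, RK m (insert p L)
        = Mlin m (Qmap m p.1 p.2) * RK m L + RK m L := by
      intro L hL
      rw [Finset.mem_powerset] at hL
      have hpL : p ∉ L := fun h => hp (hL h)
      have hL' : distinctPairs m (insert p L) :=
        distinctPairs_subset (Finset.insert_subset_insert _ hL) hK
      rw [RK_insert hpL hL', add_mul, one_mul]
    rw [Finset.sum_congr rfl key, Finset.sum_add_distrib, ← Finset.mul_sum]
    set S := ∑ L ∈ K.powerset, RK m L with hS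
    have hss : S + S = 0 := by
      rw [← two_smul (ZMod 2)]
      have h2 : (2 : ZMod 2) = 0 := rfl
      rw [h2, zero_smul]
    have hre : S + (Mlin m (Qmap m p.1 p.2) * S + S)
        = (S + S) + Mlin m (Qmap m p.1 p.2) * S := by abel
    rw [hre, hss, zero_add]

/-- As `ZMod 2`-linear endomorphisms: `R(K) = ∑_{L ⊆ K} M_{Q(L)}` and
`M_{Q(K)} = ∑_{L ⊆ K} R(L)`, where the sums range over all subsets of `K`. -/
theorem stmt12 (m : ℕ) (K : Finset (Fin m × Fin m)) (hK : distinctPairs m K) :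
    RK m K = ∑ L ∈ K.powerset, Mlin m (QKmap m L) ∧
    Mlin m (QKmap m K) = ∑ L ∈ K.powerset, RK m L :=
  ⟨part1 hK, part2 hK⟩
end
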